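/- For the polynomial Q2(x,y,z) = (x^2+y^2-25z^2)(x+4z)·x·(x-4z)(y-3z)(y+3z)(3x-4y), there exists a nonzero triple (a,b,c) of homogeneous polynomials of degree 3 in ℂ[x,y,z] with a·∂Q2/∂x + b·∂Q2/∂y + c·∂Q2/∂z = 0; hence mdr(Q2) ≤ 3. -/
import Mathlib


open MvPolynomial

noncomputable def Q2 : MvPolynomial (Fin 3) ℂ :=
  (X 0 ^ 2 + X 1 ^ 2 - 25 * X 2 ^ 2) * (X 0 + 4 * X 2) * X 0 * (X 0 - 4 * X 2) *
    (X 1 - 3 * X 2) * (X 1 + 3 * X 2) * (3 * X 0 - 4 * X 1)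

private lemma pderiv_ofNat (i : Fin 3) (n : ℕ) [n.AtLeastTwo] :
    pderiv i (OfNat.ofNat n : MvPolynomial (Fin 3) ℂ) = 0 := by
  rw [← map_ofNat (C : ℂ →+* MvPolynomial (Fin 3) ℂ) n]
  exact pderiv_C

private lemma isHom_ofNat (n : ℕ) [n.AtLeastTwo] :
    (OfNat.ofNat n : MvPolynomial (Fin 3) ℂ).IsHomogeneous 0 := by
  rw [← map_ofNat (C : ℂ →+* MvPolynomial (Fin 3) ℂ) n]
  exact isHomogeneous_C _ _

set_option maxHeartbeats 4000000 in
/-- There is a nonzero Jacobian syzygy of degree 3 for Q2; hence mdr(Q2) ≤ 3. -/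
theorem stmt_8 :
    ∃ a b c : MvPolynomial (Fin 3) ℂ,
      ¬ (a = 0 ∧ b = 0 ∧ c = 0) ∧
      a.IsHomogeneous 3 ∧ b.IsHomogeneous 3 ∧ c.IsHomogeneous 3 ∧
      a * pderiv 0 Q2 + b * pderiv 1 Q2 + c * pderiv 2 Q2 = 0 := by
  refine ⟨3 * X 0 ^ 2 * X 2 + 28 * X 0 * X 1 * X 2,
    18 * X 0 ^ 2 * X 2 + 3 * X 0 * X 1 * X 2 - 4 * X 1 ^ 2 * X 2,
    2 * X 0 ^ 2 * X 1 + 3 * X 0 * X 2 ^ 2 - 4 * X 1 * X 2 ^ 2,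
    ?_, ?_, ?_, ?_, ?_⟩
  · rintro ⟨h, -, -⟩
    have := congrArg (eval fun _ => (1 : ℂ)) h
    simp at this
    norm_num at this
  · exact (((isHom_ofNat 3).mul ((isHomogeneous_X _ _).pow 2)).mul (isHomogeneous_X _ _)).add
      ((((isHom_ofNat 28).mul (isHomogeneous_X _ _)).mul (isHomogeneous_X _ _)).mul
        (isHomogeneous_X _ _))
  · exact ((((isHom_ofNat 18).mul ((isHomogeneous_X _ _).pow 2)).mul (isHomogeneous_X _ _)).add
      ((((isHom_ofNat 3).mul (isHomogeneous_X _ _)).mul (isHomogeneous_X _ _)).mul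
        (isHomogeneous_X _ _))).sub
      (((isHom_ofNat 4).mul ((isHomogeneous_X _ _).pow 2)).mul (isHomogeneous_X _ _))
  · exact ((((isHom_ofNat 2).mul ((isHomogeneous_X _ _).pow 2)).mul (isHomogeneous_X _ _)).add
      (((isHom_ofNat 3).mul (isHomogeneous_X _ _)).mul ((isHomogeneous_X _ _).pow 2))).sub
      (((isHom_ofNat 4).mul (isHomogeneous_X _ _)).mul ((isHomogeneous_X _ _).pow 2))
  · have h0 : pderiv (0:Fin 3) Q2 = 18*X 0 ^ 5*X 1 ^ 2 - 162*X 0 ^ 5*X 2 ^ 2 - 20*X 0 ^ 4*X 1 ^ 3 + 180*X 0 ^ 4*X 1*X 2 ^ 2 + 12*X 0 ^ 3*X 1 ^ 4 - 600*X 0 ^ 3*X 1 ^ 2*X 2 ^ 2 + 4428*X 0 ^ 3*X 2 ^ 4 - 12*X 0 ^ 2*X 1 ^ 5 + 600*X 0 ^ 2*X 1 ^ 3*X 2 ^ 2 - 4428*X 0 ^ 2*X 1*X 2 ^ 4 - 96*X 0*X 1 ^ 4*X 2 ^ 2 + 3264*X 0*X 1 ^ 2*X 2 ^ 4 - 21600*X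 0*X 2 ^ 6 + 64*X 1 ^ 5*X 2 ^ 2 - 2176*X 1 ^ 3*X 2 ^ 4 + 14400*X 1*X 2 ^ 6 := by
      simp only [Q2, pderiv_mul, map_add, map_sub, pderiv_ofNat 0 3, pderiv_ofNat 0 4, pderiv_ofNat 0 25, pderiv_ofNat 1 3, pderiv_ofNat 1 4, pderiv_ofNat 1 25, pderiv_ofNat 2 3, pderiv_ofNat 2 4, pderiv_ofNat 2 25, pderiv_pow,
        pderiv_X_self, pderiv_X_of_ne (show (1 : Fin 3) ≠ 0 by decide),
        pderiv_X_of_ne (show (2 : Fin 3) ≠ 0 by decide),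
        pderiv_X_of_ne (show (0 : Fin 3) ≠ 1 by decide),
        pderiv_X_of_ne (show (2 : Fin 3) ≠ 1 by decide),
        pderiv_X_of_ne (show (0 : Fin 3) ≠ 2 by decide),
        pderiv_X_of_ne (show (1 : Fin 3) ≠ 2 by decide),
        Nat.cast_ofNat]
      ring
    have h1 : pderiv (1:Fin 3) Q2 = 6*X 0 ^ 6*X 1 - 12*X 0 ^ 5*X 1 ^ 2 + 36*X 0 ^ 5*X 2 ^ 2 + 12*X 0 ^ 4*X 1 ^ 3 - 300*X 0 ^ 4*X 1*X 2 ^ 2 - 20*X 0 ^ 3*X 1 ^ 4 + 600*X 0 ^ 3*X 1 ^ 2*X 2 ^ 2 - 1476*X 0 ^ 3*X 2 ^ 4 - 192*X 0 ^ 2*X 1 ^ 3*X 2 ^ 2 + 3264*X 0 ^ 2*X 1*X 2 ^ 4 + 320*X 0*X 1 ^ 4*X 2 ^ 2 - 6528*X 0*X 1 ^ 2*X 2 ^ 4 + 14400*X 0*X 2 ^ 6 := by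
      simp only [Q2, pderiv_mul, map_add, map_sub, pderiv_ofNat 0 3, pderiv_ofNat 0 4, pderiv_ofNat 0 25, pderiv_ofNat 1 3, pderiv_ofNat 1 4, pderiv_ofNat 1 25, pderiv_ofNat 2 3, pderiv_ofNat 2 4, pderiv_ofNat 2 25, pderiv_pow,
        pderiv_X_self, pderiv_X_of_ne (show (1 : Fin 3) ≠ 0 by decide),
        pderiv_X_of_ne (show (2 : Fin 3) ≠ 0 by decide),
        pderiv_X_of_ne (show (0 : Fin 3) ≠ 1 by decide),
        pderiv_X_of_ne (show (2 : Fin 3) ≠ 1 by decide),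
        pderiv_X_of_ne (show (0 : Fin 3) ≠ 2 by decide),
        pderiv_X_of_ne (show (1 : Fin 3) ≠ 2 by decide),
        Nat.cast_ofNat]
      ring
    have h2 : pderiv (2:Fin 3) Q2 = -54*X 0 ^ 6*X 2 + 72*X 0 ^ 5*X 1*X 2 - 300*X 0 ^ 4*X 1 ^ 2*X 2 + 4428*X 0 ^ 4*X 2 ^ 3 + 400*X 0 ^ 3*X 1 ^ 3*X 2 - 5904*X 0 ^ 3*X 1*X 2 ^ 3 - 96*X 0 ^ 2*X 1 ^ 4*X 2 + 6528*X 0 ^ 2*X 1 ^ 2*X 2 ^ 3 - 64800*X 0 ^ 2*X 2 ^ 5 + 128*X 0*X 1 ^ 5*X 2 - 8704*X 0*X 1 ^ 3*X 2 ^ 3 + 86400*X 0*X 1*X 2 ^ 5 := by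
      simp only [Q2, pderiv_mul, map_add, map_sub, pderiv_ofNat 0 3, pderiv_ofNat 0 4, pderiv_ofNat 0 25, pderiv_ofNat 1 3, pderiv_ofNat 1 4, pderiv_ofNat 1 25, pderiv_ofNat 2 3, pderiv_ofNat 2 4, pderiv_ofNat 2 25, pderiv_pow,
        pderiv_X_self, pderiv_X_of_ne (show (1 : Fin 3) ≠ 0 by decide),
        pderiv_X_of_ne (show (2 : Fin 3) ≠ 0 by decide),
        pderiv_X_of_ne (show (0 : Fin 3) ≠ 1 by decide),
        pderiv_X_of_ne (show (2 : Fin 3) ≠ 1 by decide),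
        pderiv_X_of_ne (show (0 : Fin 3) ≠ 2 by decide),
        pderiv_X_of_ne (show (1 : Fin 3) ≠ 2 by decide),
        Nat.cast_ofNat]
      ring
    rw [h0, h1, h2]
    ring
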